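/- For integers d ≥ 2 and k ≥ 2, the minimum eigenvalue of A_k is strictly less than -(2√(d-1)/d)·cos(π/(k+1)). -/

import Mathlib

/-!
`A_k = c P + (p - c)(E₁₂ + E₂₁)`, where `P` is the adjacency matrix of the path on `k` vertices,
`c = √(d-1)/d` and `p = 1/√d > c`. With `θ = π/(k+1)`, the vector `w_m = (-1)^m sin((m+1)θ)` is
an eigenvector of `P` for the eigenvalue `-2 cos θ`, so its Rayleigh quotient for `A_k` is
`-2c cos θ - 2(p - c) w₀ w₁ / ‖w‖²`, and `w₀ w₁ = -sin θ sin 2θ < 0` makes it strictly smaller than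
`-2c cos θ`. The least eigenvalue is at most any Rayleigh quotient.
-/

open Real Matrix

open Finset MatrixOrder ComplexOrder

theorem Matrix.IsHermitian.iInf_eigenvalues_mul_dotProduct_le {𝕜 n : Type*} [RCLike 𝕜]
    [Fintype n] [DecidableEq n] [Nonempty n] {A : Matrix n n 𝕜} (hA : A.IsHermitian)
    (v : n → 𝕜) :
    ((⨅ i, hA.eigenvalues i : ℝ) : 𝕜) * (star v ⬝ᵥ v) ≤ star v ⬝ᵥ A *ᵥ v := by
  have h : algebraMap ℝ (Matrix n n 𝕜) (⨅ i, hA.eigenvalues i) ≤ A := by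
    rw [algebraMap_le_iff_le_spectrum hA.isSelfAdjoint, hA.spectrum_real_eq_range_eigenvalues]
    rintro _ ⟨i, rfl⟩
    exact ciInf_le (Finite.bddBelow_range _) i
  have := (le_iff.mp h).dotProduct_mulVec_nonneg v
  rwa [sub_mulVec, dotProduct_sub, Algebra.algebraMap_eq_smul_one, smul_mulVec, one_mulVec,
    dotProduct_smul, sub_nonneg, RCLike.real_smul_eq_coe_mul] at this

namespace Matrix

variable {R : Type*} [CommSemiring R] {k : ℕ}

def superdiagonal (k : ℕ) (b : ℕ → R) : Matrix (Fin k) (Fin k) R :=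
  of fun i j => if (i : ℕ) + 1 = j then b i else 0

def symmTridiagonal (k : ℕ) (b : ℕ → R) : Matrix (Fin k) (Fin k) R :=
  superdiagonal k b + (superdiagonal k b)ᵀ

lemma superdiagonal_mulVec_apply (b w : ℕ → R) (i : Fin k) :
    (superdiagonal k b *ᵥ fun j => w j) i = if (i : ℕ) + 1 < k then b i * w (i + 1) else 0 := by
  simp only [mulVec, dotProduct, superdiagonal, of_apply, ite_mul, zero_mul]
  rw [Fin.sum_univ_eq_sum_range (fun j => if (i : ℕ) + 1 = j then b i * w j else 0), sum_ite_eq]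
  simp only [mem_range]

lemma dotProduct_superdiagonal_mulVec (b w : ℕ → R) :
    (fun i : Fin k => w i) ⬝ᵥ superdiagonal k b *ᵥ (fun i => w i) =
      ∑ m ∈ range (k - 1), b m * (w m * w (m + 1)) := by
  simp only [dotProduct, superdiagonal_mulVec_apply, mul_ite, mul_zero]
  rw [Fin.sum_univ_eq_sum_range (fun i => if i + 1 < k then w i * (b i * w (i + 1)) else 0),
    ← sum_filter]
  exact sum_congr (by ext; simp; omega) fun m _ => by ring

lemma dotProduct_symmTridiagonal_mulVec (b w : ℕ → R) :
    (fun i : Fin k => w i) ⬝ᵥ symmTridiagonal k b *ᵥ (fun i => w i) =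
      2 * ∑ m ∈ range (k - 1), b m * (w m * w (m + 1)) := by
  rw [symmTridiagonal, add_mulVec, dotProduct_add, dotProduct_transpose_mulVec,
    dotProduct_superdiagonal_mulVec, two_mul]

lemma of_eq_symmTridiagonal (k : ℕ) (p q : R) :
    (of fun i j : Fin k => if (i : ℕ) + 1 = j ∨ (j : ℕ) + 1 = i then
        (if (i : ℕ) + (j : ℕ) = 1 then p else q) else 0) =
      symmTridiagonal k (fun m => if m = 0 then p else q) := by
  ext i j
  simp only [symmTridiagonal, superdiagonal, add_apply, transpose_apply, of_apply]
  split_ifs <;> first | omega | simp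

end Matrix

lemma dotProduct_self_eq_sum_range_sq {R : Type*} [CommSemiring R] {k : ℕ} (w : ℕ → R) :
    (fun i : Fin k => w i) ⬝ᵥ (fun i => w i) = ∑ m ∈ range k, w m ^ 2 := by
  simp only [dotProduct, ← sq]
  exact Fin.sum_univ_eq_sum_range (fun m => w m ^ 2) k

lemma Finset.sum_range_ite_eq_zero_mul {R : Type*} [CommRing R] {n : ℕ} (hn : 0 < n)
    (p q : R) (x : ℕ → R) :
    ∑ m ∈ range n, (if m = 0 then p else q) * x m = q * ∑ m ∈ range n, x m + (p - q) * x 0 := by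
  obtain ⟨n, rfl⟩ := Nat.exists_eq_add_of_lt hn
  simp only [sum_range_succ', mul_add, Nat.add_eq_zero_iff, one_ne_zero, and_false, if_false,
    if_true, mul_sum]
  ring

lemma sum_range_sin_mul_sin_succ (θ : ℝ) (n : ℕ) :
    ∑ m ∈ range n, sin ((m + 1) * θ) * sin ((m + 2) * θ) =
      cos θ * ∑ m ∈ range (n + 1), sin ((m + 1) * θ) ^ 2 -
        sin ((n + 1) * θ) * sin ((n + 2) * θ) / 2 := by
  induction n with
  | zero => simp [two_mul, sin_add]; ring
  | succ n ih =>
    have three_term : sin ((n + 1) * θ) + sin ((n + 3) * θ) = 2 * cos θ * sin ((n + 2) * θ) := by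
      rw [show (n + 1) * θ = (n + 2) * θ - θ by ring, show (n + 3) * θ = (n + 2) * θ + θ by ring,
        sin_sub, sin_add]
      ring
    rw [sum_range_succ, ih, sum_range_succ _ (n + 1)]
    push_cast
    rw [show (n : ℝ) + 1 + 1 = n + 2 by ring, show (n : ℝ) + 1 + 2 = n + 3 by ring]
    linear_combination (sin ((n + 2) * θ) / 2) * three_term

lemma sum_range_sin_mul_sin_succ_of_sin_eq_zero {θ : ℝ} {k : ℕ} (hk : 1 ≤ k)
    (h : sin ((k + 1) * θ) = 0) :
    ∑ m ∈ range (k - 1), sin ((m + 1) * θ) * sin ((m + 2) * θ) =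
      cos θ * ∑ m ∈ range k, sin ((m + 1) * θ) ^ 2 := by
  obtain ⟨n, rfl⟩ := Nat.exists_eq_add_of_le' hk
  rw [Nat.add_sub_cancel, sum_range_sin_mul_sin_succ]
  push_cast at h ⊢
  rw [show (n : ℝ) + 2 = n + 1 + 1 by ring, h]
  ring

lemma neg_one_pow_sq {M : Type*} [Monoid M] [HasDistribNeg M] (m : ℕ) :
    ((-1 : M) ^ m) ^ 2 = 1 := by
  rw [← pow_mul, pow_mul', neg_one_sq, one_pow]

noncomputable def alternatingSine (θ : ℝ) (m : ℕ) : ℝ := (-1) ^ m * sin ((m + 1) * θ)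

lemma alternatingSine_sq (θ : ℝ) (m : ℕ) : alternatingSine θ m ^ 2 = sin ((m + 1) * θ) ^ 2 := by
  rw [alternatingSine, mul_pow, neg_one_pow_sq, one_mul]

lemma alternatingSine_mul_succ (θ : ℝ) (m : ℕ) :
    alternatingSine θ m * alternatingSine θ (m + 1) =
      -(sin ((m + 1) * θ) * sin ((m + 2) * θ)) := by
  rw [alternatingSine, alternatingSine, pow_succ]
  push_cast
  rw [show (m : ℝ) + 1 + 1 = m + 2 by ring]
  linear_combination (-(sin ((m + 1) * θ) * sin ((m + 2) * θ))) * neg_one_pow_sq (M := ℝ) m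

lemma sum_range_alternatingSine_mul_succ {θ : ℝ} {k : ℕ} (hk : 1 ≤ k)
    (h : sin ((k + 1) * θ) = 0) :
    ∑ m ∈ range (k - 1), alternatingSine θ m * alternatingSine θ (m + 1) =
      -cos θ * ∑ m ∈ range k, alternatingSine θ m ^ 2 := by
  simp only [alternatingSine_mul_succ, alternatingSine_sq, sum_neg_distrib,
    sum_range_sin_mul_sin_succ_of_sin_eq_zero hk h, neg_mul]

lemma sum_range_alternatingSine_sq_pos {θ : ℝ} (hθ : sin θ ≠ 0) {k : ℕ} (hk : 0 < k) :
    0 < ∑ m ∈ range k, alternatingSine θ m ^ 2 :=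
  sum_pos' (fun m _ => sq_nonneg _)
    ⟨0, mem_range.2 hk, by simpa [alternatingSine_sq] using sq_pos_of_ne_zero hθ⟩

lemma sqrt_sub_one_div_lt_one_div_sqrt {x : ℝ} (hx : 1 ≤ x) : √(x - 1) / x < 1 / √x := by
  rw [← sqrt_div_self']
  exact div_lt_div_of_pos_right (sqrt_lt_sqrt (by linarith) (by linarith)) (by linarith)

lemma two_mul_pi_div_lt_pi {k : ℕ} (hk : 2 ≤ k) : 2 * (π / (k + 1)) < π := by
  rw [← mul_div_assoc, div_lt_iff₀ (by positivity)]
  nlinarith [pi_pos, mul_le_mul_of_nonneg_left (by exact_mod_cast hk : (2 : ℝ) ≤ k) pi_pos.le]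

theorem minEig_Ak_strict_bound (k d : ℕ) (hk : 2 ≤ k) (hd : 2 ≤ d)
    (A : Matrix (Fin k) (Fin k) ℝ)
    (hA : A = Matrix.of fun i j : Fin k =>
      if (i : ℕ) + 1 = j ∨ (j : ℕ) + 1 = i then
        (if (i : ℕ) + (j : ℕ) = 1 then 1 / Real.sqrt d else Real.sqrt (d - 1) / d)
      else 0)
    (hH : A.IsHermitian) :
    haveI : Nonempty (Fin k) := ⟨⟨0, by omega⟩⟩
    (⨅ i, hH.eigenvalues i) < -(2 * Real.sqrt (d - 1) / d) * Real.cos (π / (k + 1)) := by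
  have : Nonempty (Fin k) := ⟨⟨0, by omega⟩⟩
  set θ := π / (k + 1 : ℝ) with hθ
  set p : ℝ := 1 / √d
  set c : ℝ := √(d - 1) / d
  set w : Fin k → ℝ := fun i => alternatingSine θ i
  set N := ∑ m ∈ range k, alternatingSine θ m ^ 2
  have hsin : sin ((k + 1) * θ) = 0 := by rw [hθ, mul_div_cancel₀ _ (by positivity), sin_pi]
  have hθ_pos : 0 < θ := by positivity
  have h2θ : 2 * θ < π := two_mul_pi_div_lt_pi hk
  have hsinθ : 0 < sin θ := sin_pos_of_pos_of_lt_pi hθ_pos (by linarith)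
  have hN : 0 < N := sum_range_alternatingSine_sq_pos hsinθ.ne' (by omega)
  have hgap : 0 < (p - c) * (sin θ * sin (2 * θ)) :=
    mul_pos (sub_pos.2 (sqrt_sub_one_div_lt_one_div_sqrt (by exact_mod_cast hd.trans' one_le_two)))
      (mul_pos hsinθ (sin_pos_of_pos_of_lt_pi (by linarith) h2θ))
  have hquad : w ⬝ᵥ A *ᵥ w = -(2 * c) * cos θ * N - 2 * (p - c) * (sin θ * sin (2 * θ)) := by
    rw [hA, of_eq_symmTridiagonal, dotProduct_symmTridiagonal_mulVec,
      sum_range_ite_eq_zero_mul (by omega), sum_range_alternatingSine_mul_succ (by omega) hsin,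
      alternatingSine_mul_succ]
    simp only [Nat.cast_zero, zero_add, one_mul]
    ring
  have hrayleigh : (⨅ i, hH.eigenvalues i) * N ≤ w ⬝ᵥ A *ᵥ w := by
    have hnorm : w ⬝ᵥ w = N := dotProduct_self_eq_sum_range_sq _
    simpa [hnorm] using hH.iInf_eigenvalues_mul_dotProduct_le w
  rw [mul_div_assoc]
  exact lt_of_mul_lt_mul_right (by linarith) hN.le
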